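/- Let p be an odd prime and suppose π satisfies Σ_{k≥0} π^{p^k}/p^k = 0 in a p-adic field with ord(π) = 1/(p-1). Then ord(π^{p-1} + p) ≥ p; in particular, for p = 5, π^4 + 5 ≡ 0 (mod 5^3). -/

import Mathlib

/-- Let `p` be an odd prime and `π` an element of a `p`-adically valued field with
`v π = 1/(p-1)` and `v p = 1`, satisfying `Σ_{k≥0} π^(p^k)/p^k = 0` (expressed by saying that
the valuations of the partial sums tend to infinity).  Then `v (π^(p-1) + p) ≥ p`. -/
theorem ord_pi_pow_add_p (p : ℕ) (hp : p.Prime) (hodd : Odd p)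
    (K : Type*) [Field K]
    (v : K → WithTop ℝ)
    (hv0 : ∀ x : K, v x = ⊤ ↔ x = 0)
    (hvmul : ∀ x y : K, v (x * y) = v x + v y)
    (hvadd : ∀ x y : K, min (v x) (v y) ≤ v (x + y))
    (hvp : v ((p : K)) = (1 : ℝ))
    (π : K) (hπ : v π = ((1 : ℝ) / ((p : ℝ) - 1) : ℝ))
    (hsum : ∀ C : ℝ, ∃ N : ℕ, ∀ n ≥ N,
      (C : WithTop ℝ) ≤ v (∑ k ∈ Finset.range n, π ^ (p ^ k) / (p : K) ^ k)) :
    ((p : ℝ) : WithTop ℝ) ≤ v (π ^ (p - 1) + (p : K)) := by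
  have hp3 : 3 ≤ p := by
    have h2 := hp.two_le
    rcases hp.eq_two_or_odd with h | h
    · exact absurd hodd (by simp [h])
    · omega
  have hpR : (3 : ℝ) ≤ (p : ℝ) := by exact_mod_cast hp3
  -- basic valuation lemmas
  have hv1 : v 1 = 0 := by
    have h := hvmul 1 1
    rw [one_mul] at h
    have hne : v (1 : K) ≠ ⊤ := fun ht => one_ne_zero ((hv0 1).mp ht)
    lift v (1 : K) to ℝ using hne with a ha
    rw [← WithTop.coe_add, WithTop.coe_eq_coe] at h
    have : a = 0 := by linarith
    exact_mod_cast this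
  have vpow : ∀ (x : K) (a : ℝ), v x = (a : WithTop ℝ) → ∀ m : ℕ,
      v (x ^ m) = ((m * a : ℝ) : WithTop ℝ) := by
    intro x a hx m
    induction m with
    | zero => simpa using hv1
    | succ n ih =>
      rw [pow_succ, hvmul, ih, hx, ← WithTop.coe_add, WithTop.coe_eq_coe]
      push_cast
      ring
  have vinv : ∀ (x : K) (a : ℝ), v x = (a : WithTop ℝ) →
      v x⁻¹ = ((-a : ℝ) : WithTop ℝ) := by
    intro x a hx
    have hxne : x ≠ 0 := fun h => by simp [h, (hv0 0).mpr rfl] at hx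
    have h := hvmul x x⁻¹
    rw [mul_inv_cancel₀ hxne, hv1, hx] at h
    have hne : v x⁻¹ ≠ ⊤ := by
      intro ht; rw [ht] at h; simp at h
    lift v x⁻¹ to ℝ using hne with b hb
    rw [← WithTop.coe_add, show ((0 : WithTop ℝ)) = ((0 : ℝ) : WithTop ℝ) from rfl,
      WithTop.coe_eq_coe] at h
    have : b = -a := by linarith
    exact_mod_cast this
  have vneg : ∀ x : K, v (-x) = v x := by
    intro x
    have hm : v (-1 : K) = 0 := by
      have h := hvmul (-1 : K) (-1)
      rw [neg_one_mul, neg_neg, hv1] at h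
      have hne : v (-1 : K) ≠ ⊤ := fun ht => by
        have := (hv0 (-1)).mp ht; norm_num at this
      lift v (-1 : K) to ℝ using hne with a ha
      rw [← WithTop.coe_add, show ((0 : WithTop ℝ)) = ((0 : ℝ) : WithTop ℝ) from rfl,
        WithTop.coe_eq_coe] at h
      have : a = 0 := by linarith
      exact_mod_cast this
    calc v (-x) = v ((-1) * x) := by rw [neg_one_mul]
    _ = v (-1 : K) + v x := hvmul _ _
    _ = v x := by rw [hm, zero_add]
  have vsum : ∀ (n : ℕ) (f : ℕ → K) (c : WithTop ℝ),
      (∀ i ∈ Finset.Ico 2 n, c ≤ v (f i)) → c ≤ v (∑ i ∈ Finset.Ico 2 n, f i) := by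
    intro n f c h
    induction n with
    | zero => simp [(hv0 0).mpr rfl]
    | succ m ih =>
      rcases le_or_gt (m + 1) 2 with hm | hm
      · have : Finset.Ico 2 (m+1) = ∅ := by
          apply Finset.Ico_eq_empty; omega
        simp [this, (hv0 0).mpr rfl]
      · rw [Finset.sum_Ico_succ_top (by omega)]
        refine le_trans ?_ (hvadd _ _)
        refine le_min (ih fun i hi => h i ?_) (h m (by simp; omega))
        simp at hi ⊢; omega
  -- valuation of each term
  have hpβ : (p : ℝ) - 1 ≠ 0 := by linarith
  have vterm : ∀ k : ℕ, v (π ^ (p ^ k) / (p : K) ^ k)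
      = (((p : ℝ) ^ k / ((p : ℝ) - 1) - k : ℝ) : WithTop ℝ) := by
    intro k
    have h1 : v (π ^ (p ^ k)) = (((p ^ k : ℕ) * (1 / ((p:ℝ) - 1)) : ℝ) : WithTop ℝ) :=
      vpow π _ hπ _
    have h2 : v ((p : K) ^ k) = (((k : ℝ) * 1 : ℝ) : WithTop ℝ) := vpow (p : K) 1 hvp k
    have h3 : v (((p : K) ^ k)⁻¹) = ((-((k : ℝ) * 1) : ℝ) : WithTop ℝ) := vinv _ _ h2
    rw [div_eq_mul_inv, hvmul, h1, h3, ← WithTop.coe_add, WithTop.coe_eq_coe]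
    push_cast
    ring
  -- the term valuations for k ≥ 2 are at least c2
  set c2 : ℝ := (p : ℝ) ^ 2 / ((p : ℝ) - 1) - 2 with hc2
  have hterm_ge : ∀ k : ℕ, 2 ≤ k → (c2 : WithTop ℝ) ≤ v (π ^ (p ^ k) / (p : K) ^ k) := by
    intro k hk
    rw [vterm k, WithTop.coe_le_coe, hc2]
    have key : (p : ℝ) ^ 2 + ((k : ℝ) - 2) * ((p : ℝ) - 1) ≤ (p : ℝ) ^ k := by
      induction k, hk using Nat.le_induction with
      | base => norm_num
      | succ m hm ih =>
        have h1 : (1 : ℝ) ≤ (p : ℝ) ^ m := one_le_pow₀ (by linarith)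
        have : (p : ℝ) ^ (m + 1) = (p : ℝ) ^ m * (p : ℝ) := by ring
        push_cast
        push_cast at ih
        nlinarith
    have h0 : (0:ℝ) < (p:ℝ) - 1 := by linarith
    have h1 : ((k:ℝ) - 2) ≤ ((p:ℝ)^k - (p:ℝ)^2)/((p:ℝ)-1) :=
      (le_div_iff₀ h0).mpr (by nlinarith)
    rw [sub_div] at h1
    linarith
  -- choose n
  obtain ⟨N, hN⟩ := hsum c2
  set n := max N 2 with hn
  have hn2 : 2 ≤ n := le_max_right _ _
  have hSn := hN n (le_max_left _ _)
  -- S 2 bound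
  set f : ℕ → K := fun k => π ^ (p ^ k) / (p : K) ^ k with hf
  have hsplit : ∑ k ∈ Finset.range n, f k
      = ∑ k ∈ Finset.range 2, f k + ∑ k ∈ Finset.Ico 2 n, f k := by
    simp only [Finset.range_eq_Ico]
    exact (Finset.sum_Ico_consecutive _ (by omega) hn2).symm
  have hS2eq : ∑ k ∈ Finset.range 2, f k
      = ∑ k ∈ Finset.range n, f k + (- ∑ k ∈ Finset.Ico 2 n, f k) := by
    rw [hsplit]; ring
  have hS2 : (c2 : WithTop ℝ) ≤ v (∑ k ∈ Finset.range 2, f k) := by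
    rw [hS2eq]
    refine le_trans (le_min hSn ?_) (hvadd _ _)
    rw [vneg]
    exact vsum n f _ fun i hi => hterm_ge i (Finset.mem_Ico.mp hi).1
  -- explicit form of S 2
  have hπne : π ≠ 0 := fun h => by
    rw [h, (hv0 0).mpr rfl] at hπ; exact (WithTop.top_ne_coe) hπ
  have hpne : (p : K) ≠ 0 := fun h => by
    rw [h, (hv0 0).mpr rfl] at hvp; exact (WithTop.top_ne_coe) hvp
  have hppred : p - 1 + 1 = p := Nat.succ_pred_eq_of_pos hp.pos
  have hfactor : π ^ (p - 1) + (p : K)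
      = (p : K) * π⁻¹ * (∑ k ∈ Finset.range 2, f k) := by
    have : ∑ k ∈ Finset.range 2, f k = π + π ^ p / (p : K) := by
      rw [Finset.sum_range_succ, Finset.sum_range_one, hf]
      simp
    rw [this, ← hppred, pow_succ]
    field_simp
    rw [Nat.add_sub_cancel, hppred, mul_add, mul_one, mul_div_assoc', mul_div_cancel_left₀ _ hpne]
    ring
  -- valuation of p * π⁻¹
  have hπinv : v π⁻¹ = ((-(1 / ((p:ℝ) - 1)) : ℝ) : WithTop ℝ) := vinv π _ hπ
  have hvfac : v ((p : K) * π⁻¹) = ((1 - 1 / ((p:ℝ) - 1) : ℝ) : WithTop ℝ) := by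
    rw [hvmul, hvp, hπinv, ← WithTop.coe_add, WithTop.coe_eq_coe]; ring
  rw [hfactor, hvmul, hvfac]
  calc ((p : ℝ) : WithTop ℝ)
      = ((1 - 1 / ((p:ℝ) - 1) : ℝ) : WithTop ℝ) + (c2 : WithTop ℝ) := by
        rw [← WithTop.coe_add, WithTop.coe_eq_coe, hc2]
        field_simp
        ring
    _ ≤ _ := add_le_add_right hS2 _
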